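/- If P ∈ M_m ⊗ M_n is an orthogonal projection, then ‖P‖_{S(k)} = sup{ ‖v‖_{s(k)}² : v a unit vector in the range of P }. -/

import Mathlib

open scoped BigOperators

noncomputable section

/-- Elementary tensor of two vectors. -/
def tens {m n : ℕ} (a : Fin m → ℂ) (b : Fin n → ℂ) : Fin m × Fin n → ℂ :=
  fun p => a p.1 * b p.2

/-- Inner product `⟨w|v⟩`, conjugate-linear in the first argument. -/
def ip {ι : Type} [Fintype ι] (w v : ι → ℂ) : ℂ :=
  ∑ i, (starRingEnd ℂ) (w i) * v i

/-- Euclidean norm. -/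
def nrm {ι : Type} [Fintype ι] (v : ι → ℂ) : ℝ :=
  Real.sqrt (∑ i, Complex.normSq (v i))

/-- Schmidt rank at most `k`: `v` is a sum of `k` elementary tensors. -/
def SRle {m n : ℕ} (k : ℕ) (v : Fin m × Fin n → ℂ) : Prop :=
  ∃ (a : Fin k → Fin m → ℂ) (b : Fin k → Fin n → ℂ),
    v = fun p => ∑ l, a l p.1 * b l p.2

/-- The `s(k)`-vector norm. -/
def snorm {m n : ℕ} (k : ℕ) (v : Fin m × Fin n → ℂ) : ℝ :=
  sSup { r : ℝ | ∃ w : Fin m × Fin n → ℂ, nrm w = 1 ∧ SRle k w ∧ r = ‖ip w v‖ }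

/-- The `S(k)`-operator norm. -/
def Snorm {m n : ℕ} (k : ℕ) (X : Matrix (Fin m × Fin n) (Fin m × Fin n) ℂ) : ℝ :=
  sSup { r : ℝ | ∃ v w : Fin m × Fin n → ℂ, nrm v = 1 ∧ nrm w = 1 ∧ SRle k v ∧ SRle k w ∧
    r = ‖ip w (X.mulVec v)‖ }

/-- `k`-block positivity: `⟨v|X|v⟩ ≥ 0` for all unit vectors of Schmidt rank at most `k`. -/
def kBlockPos {m n : ℕ} (k : ℕ) (X : Matrix (Fin m × Fin n) (Fin m × Fin n) ℂ) : Prop :=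
  ∀ v : Fin m × Fin n → ℂ, nrm v = 1 → SRle k v → 0 ≤ (ip v (X.mulVec v)).re

/-!
Both sides equal the supremum of `‖P x‖²` over unit vectors `x` of Schmidt rank at most `k`.
Since `P = P* = P²`, we have `⟨w|P v⟩ = ⟨P w|P v⟩` and `⟨x|P x⟩ = ‖P x‖²`: by Cauchy–Schwarz the
off-diagonal terms defining `‖P‖_{S(k)}` are dominated by the diagonal ones. For `u` in the range
of `P`, `⟨w|u⟩ = ⟨P w|u⟩` gives `‖u‖_{s(k)} ≤ sup ‖P w‖`; conversely `u = P x / ‖P x‖` satisfies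
`⟨x|u⟩ = ‖P x‖`, so `‖P x‖ ≤ ‖u‖_{s(k)}`.
-/

open Matrix

section InnerProduct

variable {ι : Type} [Fintype ι]

lemma ip_eq_inner (w v : ι → ℂ) :
    ip w v = inner ℂ (WithLp.toLp 2 w : EuclideanSpace ℂ ι) (WithLp.toLp 2 v) := by
  simp [ip, PiLp.inner_apply, RCLike.inner_apply, mul_comm]

lemma nrm_eq_norm (v : ι → ℂ) : nrm v = ‖(WithLp.toLp 2 v : EuclideanSpace ℂ ι)‖ := by
  simp [EuclideanSpace.norm_eq, nrm, Complex.normSq_eq_norm_sq]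

lemma nrm_nonneg (v : ι → ℂ) : 0 ≤ nrm v := Real.sqrt_nonneg _

lemma norm_ip_le (w v : ι → ℂ) : ‖ip w v‖ ≤ nrm w * nrm v := by
  rw [ip_eq_inner, nrm_eq_norm, nrm_eq_norm]
  exact norm_inner_le_norm _ _

lemma norm_ip_le_nrm_of_nrm_eq_one {w : ι → ℂ} (hw : nrm w = 1) (v : ι → ℂ) :
    ‖ip w v‖ ≤ nrm v :=
  (norm_ip_le w v).trans (by rw [hw, one_mul])

lemma ip_self (v : ι → ℂ) : ip v v = (nrm v : ℂ) ^ 2 := by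
  rw [ip_eq_inner, nrm_eq_norm]
  exact_mod_cast inner_self_eq_norm_sq_to_K _

lemma ip_smul_right (c : ℂ) (w v : ι → ℂ) : ip w (c • v) = c * ip w v := by
  rw [ip_eq_inner, ip_eq_inner, WithLp.toLp_smul, inner_smul_right]

lemma nrm_smul (c : ℂ) (v : ι → ℂ) : nrm (c • v) = ‖c‖ * nrm v := by
  rw [nrm_eq_norm, nrm_eq_norm, WithLp.toLp_smul, norm_smul]

lemma nrm_mulVec_le [DecidableEq ι] (X : Matrix ι ι ℂ) (v : ι → ℂ) :
    nrm (X *ᵥ v) ≤ ‖toEuclideanCLM (𝕜 := ℂ) X‖ * nrm v := by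
  rw [nrm_eq_norm, nrm_eq_norm, ← toEuclideanCLM_toLp]
  exact ContinuousLinearMap.le_opNorm _ _

lemma ip_mulVec_of_isHermitian {X : Matrix ι ι ℂ} (hX : X.IsHermitian) (w v : ι → ℂ) :
    ip w (X *ᵥ v) = ip (X *ᵥ w) v := by
  have h (u v : ι → ℂ) : ip u v = star u ⬝ᵥ v := rfl
  rw [h, h, dotProduct_mulVec, star_mulVec, hX]

end InnerProduct

section Projection

variable {ι : Type} [Fintype ι] {P : Matrix ι ι ℂ}

lemma mulVec_mulVec_of_isStarProjection (hP : IsStarProjection P) (v : ι → ℂ) :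
    P *ᵥ (P *ᵥ v) = P *ᵥ v := by
  rw [mulVec_mulVec, hP.isIdempotentElem.eq]

lemma ip_eq_ip_mulVec_of_mem_range (hP : IsStarProjection P) (w : ι → ℂ) {u : ι → ℂ}
    (hu : u ∈ Set.range P.mulVec) : ip w u = ip (P *ᵥ w) u := by
  obtain ⟨v, rfl⟩ := hu
  rw [← ip_mulVec_of_isHermitian hP.isSelfAdjoint, mulVec_mulVec_of_isStarProjection hP]

lemma ip_mulVec_self_of_isStarProjection (hP : IsStarProjection P) (x : ι → ℂ) :
    ip x (P *ᵥ x) = (nrm (P *ᵥ x) : ℂ) ^ 2 := by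
  rw [ip_eq_ip_mulVec_of_mem_range hP x ⟨x, rfl⟩, ip_self]

lemma norm_ip_mulVec_self_of_isStarProjection (hP : IsStarProjection P) (x : ι → ℂ) :
    ‖ip x (P *ᵥ x)‖ = nrm (P *ᵥ x) ^ 2 := by
  rw [ip_mulVec_self_of_isStarProjection hP, norm_pow, Complex.norm_of_nonneg (nrm_nonneg _)]

end Projection

section SchmidtNorms

variable {m n k : ℕ}

lemma snorm_le {v : Fin m × Fin n → ℂ} {c : ℝ} (hc : 0 ≤ c)
    (h : ∀ w, nrm w = 1 → SRle k w → ‖ip w v‖ ≤ c) : snorm k v ≤ c :=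
  Real.sSup_le (by rintro r ⟨w, hw, hwk, rfl⟩; exact h w hw hwk) hc

lemma snorm_nonneg (v : Fin m × Fin n → ℂ) : 0 ≤ snorm k v :=
  Real.sSup_nonneg (by rintro r ⟨w, -, -, rfl⟩; positivity)

lemma snorm_le_nrm (v : Fin m × Fin n → ℂ) : snorm k v ≤ nrm v :=
  snorm_le (nrm_nonneg v) fun _ hw _ => norm_ip_le_nrm_of_nrm_eq_one hw v

lemma norm_ip_le_snorm {w : Fin m × Fin n → ℂ} (hw : nrm w = 1) (hwk : SRle k w)
    (v : Fin m × Fin n → ℂ) : ‖ip w v‖ ≤ snorm k v :=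
  le_csSup ⟨nrm v, by rintro r ⟨w', hw', -, rfl⟩; exact norm_ip_le_nrm_of_nrm_eq_one hw' v⟩
    ⟨w, hw, hwk, rfl⟩

lemma Snorm_nonneg (X : Matrix (Fin m × Fin n) (Fin m × Fin n) ℂ) : 0 ≤ Snorm k X :=
  Real.sSup_nonneg (by rintro r ⟨v, w, -, -, -, -, rfl⟩; positivity)

lemma norm_ip_mulVec_le_Snorm (X : Matrix (Fin m × Fin n) (Fin m × Fin n) ℂ)
    {v w : Fin m × Fin n → ℂ} (hv : nrm v = 1) (hw : nrm w = 1) (hvk : SRle k v)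
    (hwk : SRle k w) : ‖ip w (X *ᵥ v)‖ ≤ Snorm k X := by
  refine le_csSup ⟨‖toEuclideanCLM (𝕜 := ℂ) X‖, ?_⟩ ⟨v, w, hv, hw, hvk, hwk, rfl⟩
  rintro r ⟨v', w', hv', hw', -, -, rfl⟩
  calc ‖ip w' (X *ᵥ v')‖ ≤ nrm (X *ᵥ v') := norm_ip_le_nrm_of_nrm_eq_one hw' _
    _ ≤ ‖toEuclideanCLM (𝕜 := ℂ) X‖ * nrm v' := nrm_mulVec_le X v'
    _ = ‖toEuclideanCLM (𝕜 := ℂ) X‖ := by rw [hv', mul_one]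

end SchmidtNorms

section ProjectionNorms

variable {m n k : ℕ} {P : Matrix (Fin m × Fin n) (Fin m × Fin n) ℂ}

lemma nrm_mulVec_sq_le_Snorm (hP : IsStarProjection P) {x : Fin m × Fin n → ℂ}
    (hx : nrm x = 1) (hxk : SRle k x) : nrm (P *ᵥ x) ^ 2 ≤ Snorm k P := by
  rw [← norm_ip_mulVec_self_of_isStarProjection hP]
  exact norm_ip_mulVec_le_Snorm P hx hx hxk hxk

lemma Snorm_le_of_forall_nrm_mulVec_sq_le (hP : IsStarProjection P) {c : ℝ} (hc : 0 ≤ c)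
    (h : ∀ x, nrm x = 1 → SRle k x → nrm (P *ᵥ x) ^ 2 ≤ c) : Snorm k P ≤ c := by
  refine Real.sSup_le ?_ hc
  rintro r ⟨v, w, hv, hw, hvk, hwk, rfl⟩
  have hvc := h v hv hvk
  have hwc := h w hw hwk
  have hPv := nrm_nonneg (P *ᵥ v)
  have hPw := nrm_nonneg (P *ᵥ w)
  calc ‖ip w (P *ᵥ v)‖ = ‖ip (P *ᵥ w) (P *ᵥ v)‖ := by
        rw [ip_eq_ip_mulVec_of_mem_range hP w ⟨v, rfl⟩]
    _ ≤ nrm (P *ᵥ w) * nrm (P *ᵥ v) := norm_ip_le _ _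
    _ ≤ c := by nlinarith [sq_nonneg (nrm (P *ᵥ w) - nrm (P *ᵥ v))]

lemma snorm_sq_le_Snorm (hP : IsStarProjection P) {u : Fin m × Fin n → ℂ} (hu : nrm u = 1)
    (huP : u ∈ Set.range P.mulVec) : snorm k u ^ 2 ≤ Snorm k P := by
  suffices snorm k u ≤ √(Snorm k P) by
    simpa [Real.sq_sqrt (Snorm_nonneg P)] using pow_le_pow_left₀ (snorm_nonneg u) this 2
  refine snorm_le (Real.sqrt_nonneg _) fun w hw hwk => ?_
  calc ‖ip w u‖ = ‖ip (P *ᵥ w) u‖ := by rw [ip_eq_ip_mulVec_of_mem_range hP w huP]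
    _ ≤ nrm (P *ᵥ w) := by simpa [hu] using norm_ip_le (P *ᵥ w) u
    _ ≤ √(Snorm k P) := Real.le_sqrt_of_sq_le (nrm_mulVec_sq_le_Snorm hP hw hwk)

lemma nrm_mulVec_sq_le_sSup (hP : IsStarProjection P) {x : Fin m × Fin n → ℂ}
    (hx : nrm x = 1) (hxk : SRle k x) :
    nrm (P *ᵥ x) ^ 2 ≤ sSup { r : ℝ | ∃ v : Fin m × Fin n → ℂ,
      nrm v = 1 ∧ v ∈ Set.range P.mulVec ∧ r = snorm k v ^ 2 } := by
  set T := { r : ℝ | ∃ v : Fin m × Fin n → ℂ,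
      nrm v = 1 ∧ v ∈ Set.range P.mulVec ∧ r = snorm k v ^ 2 }
  have hT : BddAbove T := ⟨1, by
    rintro r ⟨v, hv, -, rfl⟩
    exact pow_le_one₀ (snorm_nonneg v) (hv ▸ snorm_le_nrm v)⟩
  rcases (nrm_nonneg (P *ᵥ x)).eq_or_lt with ha | ha
  · rw [← ha, sq, zero_mul]
    exact Real.sSup_nonneg (by rintro r ⟨v, -, -, rfl⟩; positivity)
  set a := nrm (P *ᵥ x)
  set u := (a : ℂ)⁻¹ • (P *ᵥ x)
  have ha' : (a : ℂ) ≠ 0 := by exact_mod_cast ha.ne'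
  have hu : nrm u = 1 := by
    rw [nrm_smul, norm_inv, Complex.norm_of_nonneg ha.le, inv_mul_cancel₀ ha.ne']
  have huP : u ∈ Set.range P.mulVec := ⟨(a : ℂ)⁻¹ • x, mulVec_smul _ _ _⟩
  have hxu : ‖ip x u‖ = a := by
    rw [ip_smul_right, ip_mulVec_self_of_isStarProjection hP, sq, ← mul_assoc,
      inv_mul_cancel₀ ha', one_mul, Complex.norm_of_nonneg ha.le]
  have hau : a ≤ snorm k u := hxu ▸ norm_ip_le_snorm hx hxk u
  calc a ^ 2 ≤ snorm k u ^ 2 := pow_le_pow_left₀ ha.le hau 2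
    _ ≤ sSup T := le_csSup hT ⟨u, hu, huP, rfl⟩

end ProjectionNorms

/-- If `P ∈ M_m ⊗ M_n` is an orthogonal projection, then
`‖P‖_{S(k)} = sup{ ‖v‖_{s(k)}² : v a unit vector in the range of P }`. -/
theorem Snorm_projection (m n k : ℕ)
    (P : Matrix (Fin m × Fin n) (Fin m × Fin n) ℂ)
    (hPherm : P.IsHermitian) (hPidem : P * P = P) :
    Snorm k P = sSup { r : ℝ | ∃ v : Fin m × Fin n → ℂ,
      nrm v = 1 ∧ v ∈ Set.range P.mulVec ∧ r = snorm k v ^ 2 } := by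
  have hP : IsStarProjection P := ⟨hPidem, hPherm⟩
  apply le_antisymm
  · refine Snorm_le_of_forall_nrm_mulVec_sq_le hP ?_ fun x hx hxk =>
      nrm_mulVec_sq_le_sSup hP hx hxk
    exact Real.sSup_nonneg (by rintro r ⟨v, -, -, rfl⟩; positivity)
  · refine Real.sSup_le ?_ (Snorm_nonneg P)
    rintro r ⟨u, hu, huP, rfl⟩
    exact snorm_sq_le_Snorm hP hu huP
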